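/- For elements x, y in a Coxeter group W, the set {uy : u ≤ x} contains a unique minimal element in Bruhat order, denoted x ▷ y (the downwards Demazure product); moreover x ▷ y = u''y for some u'' ≤ x with ℓ(x ▷ y) = ℓ(y) − ℓ(u''). -/

import Mathlib

/-- The Bruhat order on a Coxeter group, defined via the subword property:
`u ≤ v` iff some reduced word for `v` contains a subword whose product is `u`. -/
def bruhatLE {B W : Type*} [Group W] {M : CoxeterMatrix B} (cs : CoxeterSystem M W)
    (u v : W) : Prop :=
  ∃ l : List B, cs.IsReduced l ∧ cs.wordProd l = v ∧
    ∃ l' : List B, l'.Sublist l ∧ cs.wordProd l' = u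

/-!
The number of occurrences of a reflection `t` in the right inversion sequence of a word for `w`
has a parity depending only on `w`: it is the cocycle of the action of `W` on `W × ZMod 2` in
which `s i` conjugates the first coordinate and flips the second one at `s i` (the braid relations
hold because the inversion sequence of `(s i s i')^m` is periodic). This parity is odd exactly
for the right inversions of `w`, which gives the strong exchange property. From it follow the
subword characterisation of the Bruhat order by chains `u < t u` of reflections, the lifting
property, and the "Z-property" of a left descent `s`: if `m ≤ z`, then `s m ≤ s z` when
`s m < m`, and `m ≤ s z` when `m < s m`.

The downward Demazure product is then built by induction on `ℓ x`. If `x = s x'` with `x' < x`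
and `x' ▷ y = u' y`, then every `v ≤ x` has `v ≤ x'` or `s v ≤ x'`, and the Z-property shows
that `x ▷ y` is `s u' y` when `s` is a left descent of `u' y`, and `u' y` otherwise.
-/

theorem List.count_eq_two_mul_count_take {α : Type*} [BEq α] (l : List α) (m : ℕ) (a : α)
    (hl : l.length = 2 * m) (hper : ∀ k (hk : m + k < l.length), l[m + k] = l[k]) :
    l.count a = 2 * (l.take m).count a := by
  have hdrop : l.drop m = l.take m :=
    List.ext_getElem (by simp; omega) fun k _ _ ↦ by
      simp only [List.getElem_drop, List.getElem_take]
      exact hper k _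
  conv_lhs => rw [← List.take_append_drop m l, List.count_append, hdrop, ← two_mul]

theorem List.mem_of_count_cast_eq_one {α : Type*} [BEq α] [LawfulBEq α] {l : List α} {a : α}
    (h : (l.count a : ZMod 2) = 1) : a ∈ l := by
  by_contra hmem
  rw [List.count_eq_zero_of_not_mem hmem, Nat.cast_zero] at h
  exact zero_ne_one h

namespace CoxeterSystem

open List

variable {B W : Type*} [Group W] {M : CoxeterMatrix B} (cs : CoxeterSystem M W)

local prefix:100 "s" => cs.simple
local prefix:100 "π" => cs.wordProd
local prefix:100 "ℓ" => cs.length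
local prefix:100 "ris " => cs.rightInvSeq
local prefix:100 "lis " => cs.leftInvSeq

/-! ### Parity of inversions and the strong exchange property -/

theorem reverse_alternatingWord_two_mul (i i' : B) (m : ℕ) :
    (alternatingWord i i' (2 * m)).reverse = alternatingWord i' i (2 * m) := by
  induction m with
  | zero => rfl
  | succ m ih =>
    rw [Nat.mul_succ, alternatingWord_succ', alternatingWord_succ', alternatingWord_succ,
      alternatingWord_succ]
    simp [ih]

theorem prod_map_alternatingWord_two_mul {G : Type*} [Monoid G] (f : B → G) (i i' : B) (m : ℕ) :
    ((alternatingWord i i' (2 * m)).map f).prod = (f i * f i') ^ m := by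
  induction m with
  | zero => simp [alternatingWord]
  | succ m ih =>
    rw [pow_succ', ← ih, Nat.mul_succ, alternatingWord_succ', alternatingWord_succ']
    simp [mul_assoc]

theorem wordProd_alternatingWord_two_mul_add_one (i i' : B) (m : ℕ) :
    π (alternatingWord i i' (2 * m + 1)) = s i' * (s i * s i') ^ m := by
  rw [prod_alternatingWord_eq_mul_pow, if_neg (Nat.not_even_two_mul_add_one m),
    Nat.mul_add_div two_pos, Nat.div_eq_of_lt one_lt_two, add_zero]

theorem even_count_rightInvSeq_alternatingWord (i i' : B) (t : W) [DecidableEq W] :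
    Even ((ris (alternatingWord i i' (2 * M i i'))).count t) := by
  rw [← count_reverse, ← leftInvSeq_reverse, reverse_alternatingWord_two_mul]
  refine ⟨_, (count_eq_two_mul_count_take _ (M i i') t (by simp) fun k hk ↦ ?_).trans
    (two_mul _)⟩
  simp only [length_leftInvSeq, length_alternatingWord] at hk
  -- the `k`-th entry is `s i' * (s i * s i') ^ k`, and `(s i * s i') ^ M i i' = 1`
  rw [getElem_leftInvSeq_alternatingWord cs i' i _ _ hk,
    getElem_leftInvSeq_alternatingWord cs i' i _ _ (by omega),
    wordProd_alternatingWord_two_mul_add_one, wordProd_alternatingWord_two_mul_add_one,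
    pow_add, simple_mul_simple_pow, one_mul]

open Classical in
noncomputable def parityPerm (i : B) : Equiv.Perm (W × ZMod 2) :=
  Function.Involutive.toPerm (fun p ↦ (s i * p.1 * s i, p.2 + if p.1 = s i then 1 else 0)) <| by
    rintro ⟨t, ε⟩
    have hconj : s i * (s i * t * s i) * s i = t := by
      simp only [mul_assoc, simple_mul_simple_cancel_left, simple_mul_simple_self, mul_one]
    have hfix : s i * t * s i = s i ↔ t = s i := by
      constructor
      · intro h; rw [← hconj, h, simple_mul_simple_self, one_mul]
      · rintro rfl; rw [simple_mul_simple_self, one_mul]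
    ext
    · exact hconj
    · simp only [hfix, add_assoc]
      split_ifs <;> simp [CharTwo.add_self_eq_zero]

open Classical in
theorem parityPerm_apply (i : B) (t : W) (ε : ZMod 2) :
    cs.parityPerm i (t, ε) = (s i * t * s i, ε + if t = s i then 1 else 0) :=
  rfl

open Classical in
theorem prod_map_parityPerm_apply (ω : List B) (t : W) (ε : ZMod 2) :
    (ω.map cs.parityPerm).prod (t, ε) = (π ω * t * (π ω)⁻¹, ε + (ris ω).count t) := by
  induction ω generalizing ε with
  | nil => simp
  | cons i ω ih =>
    have hiff : π ω * t * (π ω)⁻¹ = s i ↔ (π ω)⁻¹ * s i * π ω = t := by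
      constructor <;> intro h <;> rw [← h] <;> group
    simp only [map_cons, prod_cons, Equiv.Perm.mul_apply, ih, parityPerm_apply, rightInvSeq,
      count_cons, wordProd_cons, hiff, beq_iff_eq]
    ext
    · simp [mul_assoc, inv_simple]
    · split_ifs <;> push_cast <;> ring

theorem isLiftable_parityPerm : M.IsLiftable cs.parityPerm := by
  classical
  intro i i'
  refine Equiv.Perm.ext fun ⟨t, ε⟩ ↦ ?_
  rw [← prod_map_alternatingWord_two_mul, prod_map_parityPerm_apply, wordProd,
    prod_map_alternatingWord_two_mul, simple_mul_simple_pow]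
  simp [ZMod.natCast_eq_zero_iff_even.mpr (cs.even_count_rightInvSeq_alternatingWord i i' t)]

noncomputable def parityRep : W →* Equiv.Perm (W × ZMod 2) :=
  cs.lift ⟨cs.parityPerm, cs.isLiftable_parityPerm⟩

open Classical in
theorem parityRep_wordProd_apply (ω : List B) (t : W) (ε : ZMod 2) :
    cs.parityRep (π ω) (t, ε) = (π ω * t * (π ω)⁻¹, ε + (ris ω).count t) := by
  rw [← prod_map_parityPerm_apply, wordProd, map_list_prod, map_map]
  congr 4
  exact funext (cs.lift_apply_simple cs.isLiftable_parityPerm)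

noncomputable def inversionParity (w t : W) : ZMod 2 := (cs.parityRep w (t, 0)).2

open Classical in
theorem inversionParity_wordProd (ω : List B) (t : W) :
    cs.inversionParity (π ω) t = (ris ω).count t := by
  simp [inversionParity, parityRep_wordProd_apply]

theorem parityRep_apply (w t : W) (ε : ZMod 2) :
    cs.parityRep w (t, ε) = (w * t * w⁻¹, ε + cs.inversionParity w t) := by
  classical
  obtain ⟨ω, rfl⟩ := cs.wordProd_surjective w
  rw [parityRep_wordProd_apply, inversionParity_wordProd]

theorem inversionParity_mul (w₁ w₂ t : W) :
    cs.inversionParity (w₁ * w₂) t =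
      cs.inversionParity w₂ t + cs.inversionParity w₁ (w₂ * t * w₂⁻¹) := by
  have h := congrArg Prod.snd (cs.parityRep_apply (w₁ * w₂) t 0)
  rwa [map_mul, Equiv.Perm.mul_apply, parityRep_apply, parityRep_apply, zero_add, zero_add,
    eq_comm] at h

theorem inversionParity_simple_self (i : B) : cs.inversionParity (s i) (s i) = 1 := by
  classical
  simpa using cs.inversionParity_wordProd [i] (s i)

theorem inversionParity_self {t : W} (ht : cs.IsReflection t) : cs.inversionParity t t = 1 := by
  obtain ⟨u, i, rfl⟩ := ht
  have hconj : u⁻¹ * (u * s i * u⁻¹) * u = s i := by group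
  have hcancel : cs.inversionParity u⁻¹ (u * s i * u⁻¹) + cs.inversionParity u (s i) = 0 := by
    have h := cs.inversionParity_mul u u⁻¹ (u * s i * u⁻¹)
    rw [mul_inv_cancel, inv_inv, hconj] at h
    rw [← h]
    simp [inversionParity]
  calc cs.inversionParity (u * s i * u⁻¹) (u * s i * u⁻¹)
      = cs.inversionParity u⁻¹ (u * s i * u⁻¹) + cs.inversionParity (u * s i) (s i) := by
        rw [inversionParity_mul, inv_inv, hconj]
    _ = cs.inversionParity u⁻¹ (u * s i * u⁻¹) + (1 + cs.inversionParity u (s i)) := by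
        rw [inversionParity_mul, inversionParity_simple_self, mul_inv_cancel_right]
    _ = 1 := by rw [add_left_comm, hcancel, add_zero]

theorem inversionParity_mul_self {w t : W} (ht : cs.IsReflection t) :
    cs.inversionParity (w * t) t = cs.inversionParity w t + 1 := by
  rw [inversionParity_mul, inversionParity_self cs ht, ht.inv, mul_assoc, ht.mul_self, mul_one,
    add_comm]

theorem inversionParity_eq_one_of_isRightInversion {w t : W} (ht : cs.IsRightInversion w t) :
    cs.inversionParity w t = 1 := by
  classical
  have hbool : ∀ c : ZMod 2, c = 0 ∨ c = 1 := by decide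
  refine (hbool _).resolve_left fun hzero ↦ ?_
  obtain ⟨ω, hω, hwt⟩ := cs.exists_isReduced (w * t)
  have hmem : t ∈ ris ω := by
    apply mem_of_count_cast_eq_one
    rw [← inversionParity_wordProd, ← hwt, inversionParity_mul_self cs ht.1, hzero, zero_add]
  have hlt := (cs.isRightInversion_of_mem_rightInvSeq hω hmem).2
  rw [← hwt, mul_assoc, ht.1.mul_self, mul_one] at hlt
  exact lt_asymm ht.2 hlt

theorem mem_rightInvSeq_of_isRightInversion {ω : List B} {t : W}
    (ht : cs.IsRightInversion (π ω) t) : t ∈ ris ω := by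
  classical
  apply mem_of_count_cast_eq_one
  rw [← inversionParity_wordProd, inversionParity_eq_one_of_isRightInversion cs ht]

theorem mem_leftInvSeq_of_isLeftInversion {ω : List B} {t : W}
    (ht : cs.IsLeftInversion (π ω) t) : t ∈ lis ω := by
  rw [← isRightInversion_inv_iff, ← wordProd_reverse] at ht
  simpa [rightInvSeq_reverse] using cs.mem_rightInvSeq_of_isRightInversion ht

theorem exists_wordProd_eraseIdx_eq_of_isLeftInversion {ω : List B} {t : W}
    (ht : cs.IsLeftInversion (π ω) t) : ∃ j < ω.length, π (ω.eraseIdx j) = t * π ω := by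
  obtain ⟨j, hj, rfl⟩ := List.mem_iff_getElem.mp (cs.mem_leftInvSeq_of_isLeftInversion ht)
  rw [length_leftInvSeq] at hj
  refine ⟨j, hj, ?_⟩
  rw [← getD_leftInvSeq_mul_wordProd, List.getD_eq_getElem]

theorem exists_reduced_sublist (ω : List B) : ∃ σ, σ <+ ω ∧ cs.IsReduced σ ∧ π σ = π ω := by
  induction ω with
  | nil => exact ⟨[], Sublist.refl [], by simp [IsReduced], rfl⟩
  | cons i ω ih =>
    obtain ⟨σ, hσω, hσ, hπσ⟩ := ih
    rcases cs.length_simple_mul (π σ) i with hlen | hlen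
    · refine ⟨i :: σ, hσω.cons_cons i, ?_, by rw [wordProd_cons, wordProd_cons, hπσ]⟩
      rw [IsReduced, wordProd_cons, hlen, hσ.eq, length_cons]
    · obtain ⟨j, hj, hπ⟩ := cs.exists_wordProd_eraseIdx_eq_of_isLeftInversion (ω := σ)
        ⟨cs.isReflection_simple i, by omega⟩
      refine ⟨σ.eraseIdx j, ((eraseIdx_sublist σ j).trans hσω).trans (sublist_cons_self i ω), ?_,
        by rw [hπ, hπσ, wordProd_cons]⟩
      have := length_eraseIdx_add_one hj
      have := hσ.eq
      rw [IsReduced, hπ]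
      omega

/-! ### The Bruhat order as reflection chains -/

def BruhatEdge (u w : W) : Prop := ∃ t, cs.IsReflection t ∧ w = t * u ∧ ℓ u < ℓ w

def ChainLE : W → W → Prop := Relation.ReflTransGen cs.BruhatEdge

variable {cs}

theorem ChainLE.refl (w : W) : cs.ChainLE w w := Relation.ReflTransGen.refl

theorem ChainLE.trans {u v w : W} (h₁ : cs.ChainLE u v) (h₂ : cs.ChainLE v w) : cs.ChainLE u w :=
  Relation.ReflTransGen.trans h₁ h₂

theorem ChainLE.length_le {u w : W} (h : cs.ChainLE u w) : ℓ u ≤ ℓ w := by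
  induction h with
  | refl => rfl
  | tail _ hedge ih => obtain ⟨_, _, _, hlt⟩ := hedge; omega

theorem ChainLE.antisymm {u w : W} (h₁ : cs.ChainLE u w) (h₂ : cs.ChainLE w u) : u = w := by
  rcases Relation.ReflTransGen.cases_tail h₁ with rfl | ⟨v, huv, ⟨_, _, _, hlt⟩⟩
  · rfl
  · have := ChainLE.length_le huv; have := h₂.length_le; omega

theorem ChainLE.eq_one {u : W} (h : cs.ChainLE u 1) : u = 1 := by
  simpa using h.length_le

theorem chainLE_simple_mul {w : W} {i : B} (h : ¬cs.IsLeftDescent w i) :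
    cs.ChainLE w (s i * w) :=
  .single ⟨s i, cs.isReflection_simple i, rfl, by rw [cs.not_isLeftDescent_iff.mp h]; omega⟩

theorem simple_mul_chainLE {w : W} {i : B} (h : cs.IsLeftDescent w i) :
    cs.ChainLE (s i * w) w := by
  rw [cs.isLeftDescent_iff_not_isLeftDescent_mul] at h
  simpa only [simple_mul_simple_cancel_left] using chainLE_simple_mul h

theorem ChainLE.exists_sublist {u w : W} (h : cs.ChainLE u w) {ω : List B} (hω : cs.IsReduced ω)
    (hw : π ω = w) : ∃ σ, σ <+ ω ∧ cs.IsReduced σ ∧ π σ = u := by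
  induction h generalizing ω with
  | refl => exact ⟨ω, Sublist.refl ω, hω, hw⟩
  | tail _ hedge ih =>
    obtain ⟨t, ht, rfl, hlt⟩ := hedge
    obtain ⟨j, -, hj⟩ := cs.exists_wordProd_eraseIdx_eq_of_isLeftInversion
      (ω := ω) ⟨ht, by rwa [hw, ← mul_assoc, ht.mul_self, one_mul]⟩
    obtain ⟨σ, hσ, hσred, hπσ⟩ := cs.exists_reduced_sublist (ω.eraseIdx j)
    obtain ⟨τ, hτ, hτred, hπτ⟩ := ih hσred
      (by rw [hπσ, hj, hw, ← mul_assoc, ht.mul_self, one_mul])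
    exact ⟨τ, hτ.trans (hσ.trans (eraseIdx_sublist ω j)), hτred, hπτ⟩

theorem BruhatEdge.simple_mul_or_eq {z w : W} (h : cs.BruhatEdge z w) {i : B}
    (hz : ¬cs.IsLeftDescent z i) : cs.BruhatEdge (s i * z) (s i * w) ∨ w = s i * z := by
  obtain ⟨t, ht, rfl, hlt⟩ := h
  have hconj : cs.IsReflection (s i * t * s i) := by simpa [inv_simple] using ht.conj (s i)
  have hw : s i * (t * z) = s i * t * s i * (s i * z) := by
    simp [mul_assoc, simple_mul_simple_cancel_left]
  rcases (hconj.length_mul_right_ne (s i * z)).lt_or_gt with hshort | hlong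
  · right
    -- strong exchange in the reduced word `i :: ω` of `s i * z`: deleting the first letter gives
    -- `w = s i * z`, deleting any other one would make `w` shorter than `z`
    obtain ⟨ω, hω, rfl⟩ := cs.exists_isReduced z
    rw [cs.not_isLeftDescent_iff] at hz
    obtain ⟨j, hjlt, hj⟩ := cs.exists_wordProd_eraseIdx_eq_of_isLeftInversion (ω := i :: ω)
      ⟨hconj, by rwa [wordProd_cons]⟩
    rw [wordProd_cons, ← hw] at hj
    rcases j with _ | j
    · rw [eraseIdx_cons_zero] at hj
      simpa [simple_mul_simple_cancel_left] using congrArg (s i * ·) hj.symm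
    · rw [eraseIdx_cons_succ, wordProd_cons, mul_right_inj] at hj
      have := hj ▸ cs.length_wordProd_le (ω.eraseIdx j)
      have := length_eraseIdx_add_one (Nat.succ_lt_succ_iff.mp hjlt)
      have := hω.eq
      omega
  · exact .inl ⟨_, hconj, hw, by rwa [hw]⟩

theorem ChainLE.simple_mul_or {u w : W} (h : cs.ChainLE u w) (i : B) :
    cs.ChainLE (s i * u) w ∨ cs.ChainLE (s i * u) (s i * w) := by
  induction h with
  | refl => exact .inr (.refl _)
  | @tail z w _ hedge ih =>
    rcases ih with hz | hz
    · exact .inl (Relation.ReflTransGen.tail hz hedge)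
    · by_cases hdesc : cs.IsLeftDescent z i
      · exact .inl (Relation.ReflTransGen.tail (hz.trans (simple_mul_chainLE hdesc)) hedge)
      · rcases hedge.simple_mul_or_eq hdesc with hedge' | rfl
        · exact .inr (Relation.ReflTransGen.tail hz hedge')
        · exact .inl hz

theorem chainLE_wordProd_of_sublist {ω σ : List B} (hω : cs.IsReduced ω) (hσ : σ <+ ω) :
    cs.ChainLE (π σ) (π ω) := by
  induction ω generalizing σ with
  | nil => rw [sublist_nil.mp hσ]; exact .refl _
  | cons i ω ih =>
    have hω' : cs.IsReduced ω := by simpa using hω.drop 1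
    have hi : ¬cs.IsLeftDescent (π ω) i := by
      rw [not_isLeftDescent_iff, ← wordProd_cons, hω.eq, hω'.eq, length_cons]
    rw [wordProd_cons]
    rcases sublist_cons_iff.mp hσ with hσ | ⟨τ, rfl, hτ⟩
    · exact (ih hω' hσ).trans (chainLE_simple_mul hi)
    · rw [wordProd_cons]
      rcases (ih hω' hτ).simple_mul_or i with h | h
      · exact h.trans (chainLE_simple_mul hi)
      · exact h

theorem bruhatLE_iff_chainLE {u w : W} : bruhatLE cs u w ↔ cs.ChainLE u w := by
  constructor
  · rintro ⟨ω, hω, rfl, σ, hσ, rfl⟩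
    exact chainLE_wordProd_of_sublist hω hσ
  · intro h
    obtain ⟨ω, hω, rfl⟩ := cs.exists_isReduced w
    obtain ⟨σ, hσ, -, rfl⟩ := h.exists_sublist hω rfl
    exact ⟨ω, hω, rfl, σ, hσ, rfl⟩

theorem ChainLE.of_isLeftDescent {u w : W} (h : cs.ChainLE u w) {i : B}
    (hw : cs.IsLeftDescent w i) :
    cs.ChainLE u (s i * w) ∨ cs.IsLeftDescent u i ∧ cs.ChainLE (s i * u) (s i * w) := by
  obtain ⟨ω, hω, hπω⟩ := cs.exists_isReduced (s i * w)
  have hπ : π (i :: ω) = w := by rw [wordProd_cons, ← hπω, simple_mul_simple_cancel_left]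
  have hiω : cs.IsReduced (i :: ω) := by
    rw [IsReduced, hπ, length_cons, ← hω.eq, ← hπω]
    exact ((cs.isLeftDescent_iff).mp hw).symm
  obtain ⟨σ, hσ, hσred, rfl⟩ := h.exists_sublist hiω hπ
  rcases sublist_cons_iff.mp hσ with hσ | ⟨τ, rfl, hτ⟩
  · exact .inl (hπω ▸ chainLE_wordProd_of_sublist hω hσ)
  · refine .inr ⟨?_, ?_⟩
    · have := hσred.eq
      have := cs.length_wordProd_le τ
      rw [IsLeftDescent, wordProd_cons, simple_mul_simple_cancel_left, ← wordProd_cons]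
      simp only [length_cons] at *
      omega
    · rw [wordProd_cons, simple_mul_simple_cancel_left, hπω]
      exact chainLE_wordProd_of_sublist hω hτ

theorem ChainLE.simple_mul_or_of_isLeftDescent {u w : W} (h : cs.ChainLE u w) {i : B}
    (hw : cs.IsLeftDescent w i) : cs.ChainLE u (s i * w) ∨ cs.ChainLE (s i * u) (s i * w) :=
  (h.of_isLeftDescent hw).imp_right And.right

theorem ChainLE.simple_mul_of_isLeftDescent {u w : W} (h : cs.ChainLE u w) {i : B}
    (hu : cs.IsLeftDescent u i) : cs.ChainLE (s i * u) (s i * w) := by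
  by_cases hw : cs.IsLeftDescent w i
  · exact (h.of_isLeftDescent hw).elim (simple_mul_chainLE hu).trans And.right
  · exact (simple_mul_chainLE hu).trans (h.trans (chainLE_simple_mul hw))

theorem ChainLE.chainLE_simple_mul_of_not_isLeftDescent {u w : W} (h : cs.ChainLE u w) {i : B}
    (hu : ¬cs.IsLeftDescent u i) : cs.ChainLE u (s i * w) := by
  by_cases hw : cs.IsLeftDescent w i
  · exact (h.of_isLeftDescent hw).elim id fun h' ↦ absurd h'.1 hu
  · exact h.trans (chainLE_simple_mul hw)

/-! ### The downward Demazure product -/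

/-- `u * y = x ▷ y`, with `u` playing the role of `u''`. -/
structure IsDownDemazureFactor (x y u : W) : Prop where
  le : cs.ChainLE u x
  length_mul_add : ℓ (u * y) + ℓ u = ℓ y
  least : ∀ v, cs.ChainLE v x → cs.ChainLE (u * y) (v * y)

theorem isDownDemazureFactor_one (y : W) : cs.IsDownDemazureFactor 1 y 1 where
  le := .refl 1
  length_mul_add := by simp
  least v hv := by rw [hv.eq_one]; exact .refl _

theorem IsDownDemazureFactor.of_simple_mul {x y u : W} {i : B} (hx : cs.IsLeftDescent x i)
    (h : cs.IsDownDemazureFactor (s i * x) y u) : ∃ u', cs.IsDownDemazureFactor x y u' := by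
  have hcancel : ∀ v, s i * (s i * v * y) = v * y := fun v ↦ by
    rw [mul_assoc, simple_mul_simple_cancel_left]
  by_cases hm : cs.IsLeftDescent (u * y) i
  · refine ⟨s i * u, ?_, ?_, fun v hv ↦ ?_⟩
    · rcases h.le.simple_mul_or i with h' | h'
      · exact h'.trans (simple_mul_chainLE hx)
      · rwa [simple_mul_simple_cancel_left] at h'
    · have := h.length_mul_add
      have := cs.length_le_length_mul_add_left (s i * u) y
      have := cs.isLeftDescent_iff.mp hm
      rw [mul_assoc] at *
      rcases cs.length_simple_mul u i with _ | _ <;> omega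
    · rw [mul_assoc]
      rcases hv.simple_mul_or_of_isLeftDescent hx with hv | hv
      · exact (simple_mul_chainLE hm).trans (h.least v hv)
      · simpa only [hcancel] using (h.least _ hv).simple_mul_of_isLeftDescent hm
  · refine ⟨u, h.le.trans (simple_mul_chainLE hx), h.length_mul_add, fun v hv ↦ ?_⟩
    rcases hv.simple_mul_or_of_isLeftDescent hx with hv | hv
    · exact h.least v hv
    · simpa only [hcancel] using (h.least _ hv).chainLE_simple_mul_of_not_isLeftDescent hm

theorem exists_isDownDemazureFactor (x y : W) : ∃ u, cs.IsDownDemazureFactor x y u := by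
  induction hn : ℓ x using Nat.strong_induction_on generalizing x with
  | _ n ih =>
  by_cases hx : x = 1
  · exact ⟨1, hx ▸ isDownDemazureFactor_one y⟩
  · obtain ⟨i, hi⟩ := cs.exists_leftDescent_of_ne_one hx
    obtain ⟨u, hu⟩ := ih _ (hn ▸ hi) (s i * x) rfl
    exact hu.of_simple_mul hi

end CoxeterSystem

/-- The set `{uy : u ≤ x}` contains a unique minimal element `x ▷ y` in Bruhat order;
moreover `x ▷ y = u'' * y` for some `u'' ≤ x` with `ℓ(x ▷ y) = ℓ(y) − ℓ(u'')`. -/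
theorem downwards_demazure_right {B W : Type*} [Group W] {M : CoxeterMatrix B}
    (cs : CoxeterSystem M W) (x y : W) :
    (∃! m : W, (∃ u : W, bruhatLE cs u x ∧ m = u * y) ∧
      ∀ z : W, (∃ u : W, bruhatLE cs u x ∧ z = u * y) → bruhatLE cs m z) ∧
    (∀ m : W, ((∃ u : W, bruhatLE cs u x ∧ m = u * y) ∧
        ∀ z : W, (∃ u : W, bruhatLE cs u x ∧ z = u * y) → bruhatLE cs m z) →
      ∃ u'' : W, bruhatLE cs u'' x ∧ m = u'' * y ∧
        cs.length m + cs.length u'' = cs.length y) := by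
  simp only [CoxeterSystem.bruhatLE_iff_chainLE]
  obtain ⟨u, hu⟩ := cs.exists_isDownDemazureFactor x y
  have hleast : (∃ v, cs.ChainLE v x ∧ u * y = v * y) ∧
      ∀ z, (∃ v, cs.ChainLE v x ∧ z = v * y) → cs.ChainLE (u * y) z :=
    ⟨⟨u, hu.le, rfl⟩, by rintro z ⟨v, hv, rfl⟩; exact hu.least v hv⟩
  have huniq : ∀ m, ((∃ v, cs.ChainLE v x ∧ m = v * y) ∧
      ∀ z, (∃ v, cs.ChainLE v x ∧ z = v * y) → cs.ChainLE m z) → m = u * y :=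
    fun m hm ↦ (hm.2 _ hleast.1).antisymm (hleast.2 _ hm.1)
  exact ⟨⟨u * y, hleast, huniq⟩,
    fun m hm ↦ ⟨u, hu.le, huniq m hm, huniq m hm ▸ hu.length_mul_add⟩⟩
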